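/- arXiv:0907.0478 — 3 statements merged into one kernel-verified Lean document; each statement's English description precedes it below -/
import Mathlib

section
/- In the free group F(A,B,C), suppose f_0 A^s B^s C^s f_0^{-1} · ∏_{j=1}^m f_j (CBA)^{-1} f_j^{-1} · ∏_{k=1}^q g_k (CBA) g_k^{-1} = e for some f_j, g_k ∈ F(A,B,C) and natural numbers s, m, q. Then s = 0. -/
/-!
Send `A ↦ a`, `B ↦ b`, `C ↦ (b a)⁻¹` into the discrete Heisenberg group. This kills `C B A`, hence
every conjugate of `(C B A)^{±1}`, so the relation forces `a^s b^s = (b a)^s`. Comparing central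
coordinates gives `s² = (s choose 2)`, which only holds for `s = 0`.
-/

theorem map_list_prod_ofFn_conj_eq_one {G H : Type*} [Group G] [Group H] (φ : G →* H) {r : G}
    (hr : φ r = 1) {n : ℕ} (u : Fin n → G) :
    φ (List.ofFn fun i => u i * r * (u i)⁻¹).prod = 1 := by
  rw [map_list_prod, List.map_ofFn]
  exact List.prod_eq_one (by simp [hr])

/-- The discrete Heisenberg group: upper unitriangular integer matrices `[[1,x,z],[0,1,y],[0,0,1]]`
written as triples `(x, y, z)`. -/
@[ext] structure Heis where
  x : ℤ
  y : ℤ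
  z : ℤ

namespace Heis

instance : Mul Heis := ⟨fun p q => ⟨p.x + q.x, p.y + q.y, p.z + q.z + p.x * q.y⟩⟩
instance : One Heis := ⟨⟨0, 0, 0⟩⟩
instance : Inv Heis := ⟨fun p => ⟨-p.x, -p.y, p.x * p.y - p.z⟩⟩

@[simp] lemma mul_x (p q : Heis) : (p * q).x = p.x + q.x := rfl
@[simp] lemma mul_y (p q : Heis) : (p * q).y = p.y + q.y := rfl
@[simp] lemma mul_z (p q : Heis) : (p * q).z = p.z + q.z + p.x * q.y := rfl
@[simp] lemma one_x : (1 : Heis).x = 0 := rfl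
@[simp] lemma one_y : (1 : Heis).y = 0 := rfl
@[simp] lemma one_z : (1 : Heis).z = 0 := rfl
@[simp] lemma inv_x (p : Heis) : p⁻¹.x = -p.x := rfl
@[simp] lemma inv_y (p : Heis) : p⁻¹.y = -p.y := rfl
@[simp] lemma inv_z (p : Heis) : p⁻¹.z = p.x * p.y - p.z := rfl

instance : Group Heis where
  mul_assoc a b c := by ext <;> simp <;> ring
  one_mul a := by ext <;> simp
  mul_one a := by ext <;> simp
  inv_mul_cancel a := by ext <;> simp

lemma pow_eq (p : Heis) (n : ℕ) :
    p ^ n = ⟨n * p.x, n * p.y, n * p.z + n.choose 2 * p.x * p.y⟩ := by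
  induction n with
  | zero => ext <;> simp
  | succ k ih =>
    have choose_succ : (k + 1).choose 2 = k.choose 2 + k := by
      simp [Nat.choose_succ_succ, add_comm]
    rw [pow_succ, ih]
    ext <;> simp only [mul_x, mul_y, mul_z, choose_succ] <;> push_cast <;> ring

def a : Heis := ⟨1, 0, 0⟩
def b : Heis := ⟨0, 1, 0⟩

lemma a_pow_mul_b_pow_ne_ba_pow {s : ℕ} (hs : s ≠ 0) : a ^ s * b ^ s ≠ (b * a) ^ s := by
  intro h
  have central : (s * s : ℤ) = s.choose 2 := by
    simpa [pow_eq, a, b] using congrArg z h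
  exact (Nat.choose_lt_pow hs le_rfl).ne (by rw [sq]; exact_mod_cast central.symm)

end Heis

/-- in `F(A,B,C)`, if
`f₀ A^s B^s C^s f₀⁻¹ ⬝ ∏_{j=1}^m f_j (CBA)⁻¹ f_j⁻¹ ⬝ ∏_{k=1}^q g_k (CBA) g_k⁻¹ = e`,
then `s = 0`. -/
theorem conj_product_relation_forces_zero (s m q : ℕ)
    (A B C : FreeGroup (Fin 3))
    (hA : A = FreeGroup.of 0) (hB : B = FreeGroup.of 1) (hC : C = FreeGroup.of 2)
    (f₀ : FreeGroup (Fin 3)) (f : Fin m → FreeGroup (Fin 3)) (g : Fin q → FreeGroup (Fin 3))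
    (h : f₀ * A ^ s * B ^ s * C ^ s * f₀⁻¹ *
        (List.ofFn fun j => f j * (C * B * A)⁻¹ * (f j)⁻¹).prod *
        (List.ofFn fun k => g k * (C * B * A) * (g k)⁻¹).prod = 1) :
    s = 0 := by
  let φ : FreeGroup (Fin 3) →* Heis := FreeGroup.lift ![Heis.a, Heis.b, (Heis.b * Heis.a)⁻¹]
  have hCBA : φ (C * B * A) = 1 := by simp [φ, hA, hB, hC, mul_assoc]
  have hf := map_list_prod_ofFn_conj_eq_one φ (by rw [map_inv, hCBA, inv_one]) f
  have hg := map_list_prod_ofFn_conj_eq_one φ hCBA g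
  have hw : φ (f₀ * (A ^ s * B ^ s * C ^ s) * f₀⁻¹) = 1 := by
    have := congrArg φ h
    rw [map_mul, map_mul, hf, hg, mul_one, mul_one, map_one] at this
    simpa only [mul_assoc] using this
  rw [map_mul, map_mul, map_inv, conj_eq_one_iff] at hw
  by_contra hs
  apply Heis.a_pow_mul_b_pow_ne_ba_pow hs
  rw [← mul_inv_eq_one, ← inv_pow]
  simpa only [φ, hA, hB, hC, map_mul, map_pow, FreeGroup.lift_apply_of, Matrix.cons_val] using hw
end

section
/- Let p, n, i, j, k be natural numbers and let g ∈ F(A,B,C) be any element of the form g = h_0 A^i B^j C^k h_0^{-1} · ∏_{a=1}^p f_a (ABC) f_a^{-1} · ∏_{b=1}^n g_b (ABC)^{-1} g_b^{-1} for some h_0, f_a, g_b ∈ F(A,B,C). Then the spelling length satisfies Λ(g) ≥ i + j + k − (p + n + 2). -/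
/-- The conjugated-generator factor `h * c_i^{±1} * h⁻¹`. -/
def spellingFactor {n : ℕ} (x : FreeGroup (Fin n) × Fin n × Bool) : FreeGroup (Fin n) :=
  x.1 * (if x.2.2 then FreeGroup.of x.2.1 else (FreeGroup.of x.2.1)⁻¹) * x.1⁻¹

/-- `L` is a spelling of `g`: a factorization of `g` into conjugated generators/inverse
generators. -/
def IsSpelling {n : ℕ} (g : FreeGroup (Fin n))
    (L : List (FreeGroup (Fin n) × Fin n × Bool)) : Prop :=
  (L.map spellingFactor).prod = g

/-- The spelling length `Λ(g)`: the least number of factors among all spellings of `g`. -/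
noncomputable def spellingLength {n : ℕ} (g : FreeGroup (Fin n)) : ℕ :=
  sInf {r | ∃ L, IsSpelling g L ∧ L.length = r}

/-- The exponent sum (abelianized degree) of the generator `c_j` in `g`. -/
def degGen {n : ℕ} (g : FreeGroup (Fin n)) (j : Fin n) : ℤ :=
  Multiplicative.toAdd
    ((FreeGroup.lift fun i => if i = j then Multiplicative.ofAdd (1 : ℤ) else 1) g)

/-
Call a cover of a word a noncrossing partition of its letters into single letters (cost 1),
pairs `x … x⁻¹` (cost 0) and triples spelling a cyclic rotation of `ABC` or `(ABC)⁻¹` (cost 1).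
Covers survive cyclic rotation and free cancellation without gaining cost, so the reduced word of
a product of `m` conjugates of generators and of `(ABC)^{±1}` has a cover of cost at most `m`.
Rearranging the hypothesis, `A^i B^j C^k` is such a product with `m = Λ(G) + p + n`. In the
positive, sorted word `A^i B^j C^k` no pair can occur, and two triples `A … B … C` would cross,
so its length `i + j + k` exceeds the cost by at most `2`.
-/

open FreeGroup

lemma exists_isSpelling {n : ℕ} (g : FreeGroup (Fin n)) : ∃ L, IsSpelling g L := by
  induction g using FreeGroup.induction_on with
  | C1 => exact ⟨[], rfl⟩
  | of i => exact ⟨[(1, i, true)], by simp [IsSpelling, spellingFactor]⟩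
  | inv_of i _ => exact ⟨[(1, i, false)], by simp [IsSpelling, spellingFactor]⟩
  | mul g h hg hh =>
    obtain ⟨L, rfl⟩ := hg
    obtain ⟨M, rfl⟩ := hh
    exact ⟨L ++ M, by simp [IsSpelling]⟩

lemma exists_isSpelling_length_eq_spellingLength {n : ℕ} (g : FreeGroup (Fin n)) :
    ∃ L, IsSpelling g L ∧ L.length = spellingLength g := by
  obtain ⟨L, hL⟩ := exists_isSpelling g
  have hne : {r | ∃ L, IsSpelling g L ∧ L.length = r}.Nonempty := ⟨L.length, L, hL, rfl⟩
  exact Nat.sInf_mem hne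

namespace ABCCover

abbrev Letter : Type := Fin 3 × Bool

def inv (x : Letter) : Letter := (x.1, !x.2)

@[simp] lemma inv_inv (x : Letter) : inv (inv x) = x := by simp [inv]

@[simp] lemma invRev_cons_letter (x : Letter) (w : List Letter) :
    invRev (x :: w) = invRev w ++ [inv x] := by
  simp [invRev, inv]

/-- The cyclic rotations of `ABC` and of `(ABC)⁻¹ = C⁻¹B⁻¹A⁻¹`. -/
def relatorRotations : List (Letter × Letter × Letter) :=
  [((0, true), (1, true), (2, true)), ((1, true), (2, true), (0, true)),
    ((2, true), (0, true), (1, true)), ((2, false), (1, false), (0, false)),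
    ((1, false), (0, false), (2, false)), ((0, false), (2, false), (1, false))]

def IsRelatorRotation (x y z : Letter) : Prop := (x, y, z) ∈ relatorRotations

namespace IsRelatorRotation

variable {x y z : Letter}

lemma rotate (h : IsRelatorRotation x y z) : IsRelatorRotation y z x := by
  have key : ∀ ρ ∈ relatorRotations, (ρ.2.1, ρ.2.2, ρ.1) ∈ relatorRotations := by
    simp [relatorRotations]
  exact key _ h

lemma invRev (h : IsRelatorRotation x y z) : IsRelatorRotation (inv z) (inv y) (inv x) := by
  have key : ∀ ρ ∈ relatorRotations, (inv ρ.2.2, inv ρ.2.1, inv ρ.1) ∈ relatorRotations := by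
    simp [relatorRotations, inv]
  exact key _ h

lemma snd_ne_inv_fst (h : IsRelatorRotation x y z) : y ≠ inv x := by
  have key : ∀ ρ ∈ relatorRotations, ρ.2.1 ≠ inv ρ.1 := by simp [relatorRotations, inv]
  exact key _ h

lemma eq_of_inv_fst {y' z' : Letter} (h : IsRelatorRotation x y z)
    (h' : IsRelatorRotation (inv x) y' z') : y' = inv z ∧ z' = inv y := by
  have key : ∀ ρ ∈ relatorRotations, ∀ σ ∈ relatorRotations, σ.1 = inv ρ.1 →
      σ.2.1 = inv ρ.2.2 ∧ σ.2.2 = inv ρ.2.1 := by simp [relatorRotations, inv]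
  exact key _ h _ h' rfl

lemma eq_abc_of_sorted (h : IsRelatorRotation x y z) (hx : x.2 = true) (hxy : x.1 ≤ y.1)
    (hyz : y.1 ≤ z.1) : x = (0, true) ∧ y = (1, true) ∧ z = (2, true) := by
  have key : ∀ ρ ∈ relatorRotations, ρ.1.2 = true → ρ.1.1 ≤ ρ.2.1.1 → ρ.2.1.1 ≤ ρ.2.2.1 →
      ρ.1 = (0, true) ∧ ρ.2.1 = (1, true) ∧ ρ.2.2 = (2, true) := by
    simp [relatorRotations]
  exact key _ h hx hxy hyz

end IsRelatorRotation

/-- `HasCover w c`: the letters of `w` split into noncrossing blocks, each a single letter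
(cost 1), a pair `x … x⁻¹` (cost 0) or a triple `x … y … z` spelling a rotation of `ABC` or
`(ABC)⁻¹` (cost 1), of total cost at most `c`. -/
inductive HasCover : List Letter → ℕ → Prop
  | nil : HasCover [] 0
  | single (x : Letter) : HasCover [x] 1
  | append {v w : List Letter} {a b : ℕ} : HasCover v a → HasCover w b →
      HasCover (v ++ w) (a + b)
  | wrap (x : Letter) {v : List Letter} {a : ℕ} : HasCover v a → HasCover (x :: v ++ [inv x]) a
  | triple {x y z : Letter} {u v : List Letter} {a b : ℕ} : IsRelatorRotation x y z →
      HasCover u a → HasCover v b → HasCover (x :: u ++ y :: v ++ [z]) (a + b + 1)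
  | mono {w : List Letter} {a b : ℕ} : HasCover w a → a ≤ b → HasCover w b

/-- The block containing the first letter `x` of a cover of `x :: w`, with `w` split around it. -/
inductive HeadBlock (x : Letter) : List Letter → ℕ → Prop
  | single {w : List Letter} {a : ℕ} : HasCover w a → HeadBlock x w (a + 1)
  | pair {u v : List Letter} {a b : ℕ} : HasCover u a → HasCover v b →
      HeadBlock x (u ++ inv x :: v) (a + b)
  | triple {y z : Letter} {u v t : List Letter} {a b d : ℕ} : IsRelatorRotation x y z →
      HasCover u a → HasCover v b → HasCover t d →
      HeadBlock x (u ++ y :: v ++ z :: t) (a + b + d + 1)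

variable {x y z : Letter} {u v w w' : List Letter} {a b c d : ℕ}

lemma HasCover.of_eq_of_le (h : HasCover w a) (hw : w = w') (ha : a ≤ b) : HasCover w' b :=
  hw ▸ h.mono ha

lemma HeadBlock.append_right (h : HeadBlock x w a) (hv : HasCover v b) :
    HeadBlock x (w ++ v) (a + b) := by
  cases h with
  | single hw => simpa [Nat.add_right_comm] using HeadBlock.single (hw.append hv)
  | pair hu hv' => simpa [Nat.add_assoc] using HeadBlock.pair hu (hv'.append hv)
  | triple hr hu hv' ht =>
    simpa [Nat.add_assoc, Nat.add_comm 1 b, Nat.add_left_comm _ b]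
      using HeadBlock.triple hr hu hv' (ht.append hv)

lemma HasCover.headBlock (h : HasCover (x :: w) c) : ∃ a ≤ c, HeadBlock x w a := by
  generalize e : x :: w = xw at h
  induction h generalizing w with
  | nil => cases e
  | single y => cases e; exact ⟨1, le_rfl, .single .nil⟩
  | @append v u a b hv hu ihv ihu =>
    rcases List.cons_eq_append_iff.1 e with ⟨rfl, he⟩ | ⟨v', rfl, rfl⟩
    · obtain ⟨a', ha', hb⟩ := ihu he.symm
      exact ⟨a', by omega, hb⟩
    · obtain ⟨a', ha', hb⟩ := ihv rfl
      exact ⟨a' + b, by omega, hb.append_right hu⟩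
  | wrap y hv => cases e; exact ⟨_, le_rfl, .pair hv .nil⟩
  | triple hr hu hv => cases e; exact ⟨_, le_rfl, .triple hr hu hv .nil⟩
  | mono _ hab ih =>
    obtain ⟨a', ha', hb⟩ := ih e
    exact ⟨a', ha'.trans hab, hb⟩

lemma HasCover.rotate_cons (h : HasCover (x :: w) c) : HasCover (w ++ [x]) c := by
  obtain ⟨a, hac, hb⟩ := h.headBlock
  refine HasCover.mono ?_ hac
  cases hb with
  | single hw => exact hw.append (.single x)
  | pair hu hv => exact (hu.append (.wrap (inv x) hv)).of_eq_of_le (by simp) le_rfl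
  | triple hr hu hv ht =>
    exact (hu.append (.triple hr.rotate hv ht)).of_eq_of_le (by simp) (by omega)

lemma HasCover.rotate {p q : List Letter} (h : HasCover (p ++ q) c) : HasCover (q ++ p) c := by
  induction p generalizing q with
  | nil => simpa using h
  | cons x p ih => simpa using ih (q := q ++ [x]) (by simpa using h.rotate_cons)

lemma HasCover.tail (h : HasCover (x :: w) c) : HasCover w (c + 1) := by
  obtain ⟨a, hac, hb⟩ := h.headBlock
  cases hb with
  | single hw => exact hw.mono (by omega)
  | pair hu hv =>
    exact (hu.append ((HasCover.single (inv x)).append hv)).of_eq_of_le (by simp) (by omega)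
  | @triple y z u v t a b d hr hu hv ht =>
    exact (hu.append (((HasCover.single y).append hv).append
      ((HasCover.single z).append ht))).of_eq_of_le (by simp) (by omega)

lemma HasCover.cancel_of_isRelatorRotation (hr : IsRelatorRotation x y z)
    (hu : HasCover (inv x :: u) a) (hv : HasCover v b) (ht : HasCover w d) :
    HasCover (u ++ y :: v ++ z :: w) (a + b + d + 1) := by
  obtain ⟨a', ha', hb⟩ := hu.headBlock
  cases hb with
  | single hu' =>
    exact (hu'.append ((HasCover.single y).append
      (hv.append ((HasCover.single z).append ht)))).of_eq_of_le (by simp) (by omega)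
  | pair hU hV =>
    exact (hU.append ((HasCover.triple hr hV hv).append ht)).of_eq_of_le (by simp) (by omega)
  | triple hr' hU hV hT =>
    -- the triples `x y z` and `x⁻¹ z⁻¹ y⁻¹` leave behind two nested pairs
    obtain ⟨rfl, rfl⟩ := hr.eq_of_inv_fst hr'
    exact (hU.append ((HasCover.wrap (inv z)
      (hV.append ((HasCover.wrap (inv y) hT).append hv))).append ht)).of_eq_of_le
      (by simp) (by omega)

lemma HasCover.cancel_head (h : HasCover (x :: inv x :: w) c) : HasCover w c := by
  obtain ⟨a, hac, hb⟩ := h.headBlock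
  refine HasCover.mono ?_ hac
  generalize e : inv x :: w = w' at hb
  cases hb with
  | single hw => subst e; exact hw.tail
  | pair hu hv =>
    rcases List.cons_eq_append_iff.1 e with ⟨rfl, he⟩ | ⟨u', rfl, rfl⟩
    · cases he
      exact hv.mono (by omega)
    · exact (hu.rotate_cons.append hv).of_eq_of_le (by simp) le_rfl
  | triple hr hu hv ht =>
    simp only [List.append_assoc, List.cons_append] at e
    rcases List.cons_eq_append_iff.1 e with ⟨rfl, he⟩ | ⟨u', rfl, rfl⟩
    · cases he
      exact absurd rfl hr.snd_ne_inv_fst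
    · exact (hu.cancel_of_isRelatorRotation hr hv ht).of_eq_of_le (by simp) le_rfl

lemma HasCover.of_red_step (hs : Red.Step w w') (h : HasCover w c) : HasCover w' c := by
  obtain ⟨⟩ := hs
  exact (HasCover.cancel_head h.rotate).rotate

lemma HasCover.of_red (hr : Red w w') (h : HasCover w c) : HasCover w' c := by
  induction hr with
  | refl => exact h
  | tail _ hs ih => exact ih.of_red_step hs

lemma HasCover.invRev (h : HasCover w c) : HasCover (FreeGroup.invRev w) c := by
  induction h with
  | nil => exact .nil
  | single x => exact .single _
  | append _ _ ihv ihw => simpa [Nat.add_comm] using ihw.append ihv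
  | wrap x _ ih => simpa using HasCover.wrap x ih
  | triple hr _ _ ihu ihv =>
    simpa [Nat.add_comm] using HasCover.triple hr.invRev ihv ihu
  | mono _ hab ih => exact ih.mono hab

lemma HasCover.conj (h : HasCover w c) (u : List Letter) :
    HasCover (u ++ w ++ FreeGroup.invRev u) c := by
  induction u with
  | nil => simpa using h
  | cons x u ih => simpa using HasCover.wrap x ih

lemma HasCover.length_le_of_sorted (h : HasCover w c) (hpos : ∀ l ∈ w, l.2 = true)
    (hsort : w.Pairwise fun l l' => l.1 ≤ l'.1) :
    w.length ≤ c + 2 ∧ ((∃ g, ∀ l ∈ w, l.1 ≠ g) → w.length ≤ c) := by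
  induction h with
  | nil => simp
  | single x => simp
  | @append v u a b _ _ ihv ihu =>
    simp only [List.mem_append, List.pairwise_append] at hpos hsort
    obtain ⟨hv, hu⟩ := ihv (fun l hl => hpos l (.inl hl)) hsort.1,
      ihu (fun l hl => hpos l (.inr hl)) hsort.2.1
    have hmiss : (∃ g, ∀ l ∈ v, l.1 ≠ g) ∨ ∀ l ∈ u, l.1 ≠ 0 := by
      by_cases hC : ∃ l ∈ v, l.1 = 2
      · obtain ⟨l, hl, hl2⟩ := hC
        refine .inr fun l' hl' hl'0 => ?_
        have := hsort.2.2 l hl l' hl'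
        rw [hl2, hl'0] at this
        exact absurd this (by decide)
      · exact .inl ⟨2, fun l hl hl2 => hC ⟨l, hl, hl2⟩⟩
    refine ⟨?_, fun ⟨g, hg⟩ => ?_⟩
    · rcases hmiss with hmiss | hmiss
      · have := hv.2 hmiss; simp only [List.length_append]; omega
      · have := hu.2 ⟨0, hmiss⟩; simp only [List.length_append]; omega
    · have := hv.2 ⟨g, fun l hl => hg l (by simp [hl])⟩
      have := hu.2 ⟨g, fun l hl => hg l (by simp [hl])⟩
      simp only [List.length_append]; omega
  | wrap x _ _ =>
    have h1 := hpos x (by simp)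
    have h2 := hpos (inv x) (by simp)
    simp [inv, h1] at h2
  | @triple x y z u v a b hr _ _ ihu ihv =>
    have hsort' : (x :: u ++ (y :: v ++ [z])).Pairwise fun l l' => l.1 ≤ l'.1 := by
      simpa only [List.append_assoc] using hsort
    have hyvz : (y :: v ++ [z]).Pairwise fun l l' => l.1 ≤ l'.1 := hsort'.sublist (by simp)
    obtain ⟨rfl, rfl, rfl⟩ := hr.eq_abc_of_sorted (hpos x (by simp))
      (hsort'.rel_of_mem_append (by simp) (by simp)) (hsort.rel_of_mem_append (by simp) (by simp))
    have hu := (ihu (fun l hl => hpos l (by simp [hl])) (hsort'.sublist (by simp))).2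
      ⟨2, fun l hl hl2 => by
        have := hsort'.rel_of_mem_append (List.mem_cons_of_mem _ hl) List.mem_cons_self
        simp [hl2] at this⟩
    have hv := (ihv (fun l hl => hpos l (by simp [hl])) (hyvz.sublist (by simp))).2
      ⟨0, fun l hl hl0 => by
        have := (List.pairwise_cons.1 hyvz).1 l (by simp [hl])
        simp [hl0] at this⟩
    refine ⟨by simp; omega, fun ⟨g, hg⟩ => ?_⟩
    fin_cases g
    · exact absurd rfl (hg (0, true) (by simp))
    · exact absurd rfl (hg (1, true) (by simp))
    · exact absurd rfl (hg (2, true) (by simp))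
  | mono _ hab ih =>
    obtain ⟨h1, h2⟩ := ih hpos hsort
    exact ⟨by omega, fun hg => by have := h2 hg; omega⟩

def CoverCostLE (g : FreeGroup (Fin 3)) (c : ℕ) : Prop := ∃ w, mk w = g ∧ HasCover w c

namespace CoverCostLE

variable {g h : FreeGroup (Fin 3)}

lemma mul (hg : CoverCostLE g a) (hh : CoverCostLE h b) : CoverCostLE (g * h) (a + b) := by
  obtain ⟨v, rfl, hv⟩ := hg
  obtain ⟨w, rfl, hw⟩ := hh
  exact ⟨v ++ w, mul_mk.symm, hv.append hw⟩

lemma inv (hg : CoverCostLE g c) : CoverCostLE g⁻¹ c := by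
  obtain ⟨w, rfl, hw⟩ := hg
  exact ⟨FreeGroup.invRev w, inv_mk.symm, hw.invRev⟩

lemma conj (hg : CoverCostLE g c) (u : FreeGroup (Fin 3)) : CoverCostLE (u * g * u⁻¹) c := by
  obtain ⟨w, rfl, hw⟩ := hg
  refine ⟨u.toWord ++ w ++ FreeGroup.invRev u.toWord, ?_, hw.conj _⟩
  rw [← mul_mk, ← mul_mk, ← inv_mk, mk_toWord]

lemma list_prod {l : List (FreeGroup (Fin 3))} (hl : ∀ g ∈ l, CoverCostLE g 1) :
    CoverCostLE l.prod l.length := by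
  induction l with
  | nil => exact ⟨[], rfl, .nil⟩
  | cons g l ih =>
    simpa [Nat.add_comm] using (hl g (by simp)).mul (ih fun g' hg' => hl g' (by simp [hg']))

lemma prod_ofFn {m : ℕ} {F : Fin m → FreeGroup (Fin 3)} (hF : ∀ a, CoverCostLE (F a) 1) :
    CoverCostLE (List.ofFn F).prod m := by
  simpa using list_prod (l := List.ofFn F) (by simpa using hF)

lemma hasCover_toWord (hg : CoverCostLE g c) : HasCover g.toWord c := by
  obtain ⟨w, rfl, hw⟩ := hg
  rw [toWord_mk]
  exact hw.of_red reduce.red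

end CoverCostLE

lemma coverCostLE_abc : CoverCostLE (of 0 * of 1 * of 2) 1 :=
  ⟨[(0, true), (1, true), (2, true)], rfl,
    .triple (by simp [IsRelatorRotation, relatorRotations]) .nil .nil⟩

lemma coverCostLE_spellingFactor (q : FreeGroup (Fin 3) × Fin 3 × Bool) :
    CoverCostLE (spellingFactor q) 1 := by
  obtain ⟨u, i, b⟩ := q
  have hletter : (if b then of i else (of i)⁻¹) = mk [(i, b)] := by cases b <;> rfl
  simpa [spellingFactor, hletter] using CoverCostLE.conj ⟨[(i, b)], rfl, .single _⟩ u

lemma _root_.IsSpelling.coverCostLE {g : FreeGroup (Fin 3)}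
    {L : List (FreeGroup (Fin 3) × Fin 3 × Bool)} (hL : IsSpelling g L) :
    CoverCostLE g L.length := by
  rw [← hL, ← L.length_map spellingFactor]
  refine CoverCostLE.list_prod fun g hg => ?_
  obtain ⟨q, -, rfl⟩ := List.mem_map.1 hg
  exact coverCostLE_spellingFactor q

lemma le_of_coverCostLE_pow_mul_pow_mul_pow {i j k : ℕ}
    (h : CoverCostLE (of 0 ^ i * of 1 ^ j * of 2 ^ k) c) : i + j + k ≤ c + 2 := by
  set w : List Letter :=
    List.replicate i (0, true) ++ List.replicate j (1, true) ++ List.replicate k (2, true)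
  have hpos : ∀ l ∈ w, l.2 = true := by simp [w]
  have hsort : w.Pairwise fun l l' => l.1 ≤ l'.1 := by
    simp [w, List.pairwise_append, List.pairwise_replicate]
  have hw : (of 0 ^ i * of 1 ^ j * of 2 ^ k : FreeGroup (Fin 3)).toWord = w := by
    have hred : IsReduced w := (List.pairwise_of_forall_mem_list
      fun l hl l' hl' (_ : l.1 = l'.1) => (hpos l hl).trans (hpos l' hl').symm).isChain
    rw [← hred.reduce_eq, ← toWord_mk]
    simp only [w, ← mul_mk, ← toWord_of_pow, mk_toWord]
  have := ((hw ▸ h.hasCover_toWord).length_le_of_sorted hpos hsort).1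
  simp only [w, List.length_append, List.length_replicate] at this
  exact this

end ABCCover

/-- Proposition `spelling length 2`: any element of
`⟨A^i B^j C^k⟩ ⟨ABC⟩^p ⟨(ABC)⁻¹⟩^n` has spelling length at least `i + j + k - (p + n + 2)`. -/
theorem spellingLength_lower_bound_ABC (p n i j k : ℕ)
    (A B C : FreeGroup (Fin 3))
    (hA : A = FreeGroup.of 0) (hB : B = FreeGroup.of 1) (hC : C = FreeGroup.of 2)
    (h₀ : FreeGroup (Fin 3)) (f : Fin p → FreeGroup (Fin 3)) (g : Fin n → FreeGroup (Fin 3))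
    (G : FreeGroup (Fin 3))
    (hG : G = h₀ * A ^ i * B ^ j * C ^ k * h₀⁻¹ *
        (List.ofFn fun a => f a * (A * B * C) * (f a)⁻¹).prod *
        (List.ofFn fun b => g b * (A * B * C)⁻¹ * (g b)⁻¹).prod) :
    (spellingLength G : ℤ) ≥ (i : ℤ) + j + k - (p + n + 2) := by
  open ABCCover in
  subst hA hB hC
  obtain ⟨L, hL, hlen⟩ := exists_isSpelling_length_eq_spellingLength G
  have hP := CoverCostLE.prod_ofFn fun a => coverCostLE_abc.conj (f a)
  have hQ := CoverCostLE.prod_ofFn fun b => coverCostLE_abc.inv.conj (g b)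
  have hX : CoverCostLE (of 0 ^ i * of 1 ^ j * of 2 ^ k) (spellingLength G + n + p) := by
    rw [← hlen]
    convert ((hL.coverCostLE.mul hQ.inv).mul hP.inv).conj h₀⁻¹ using 1
    rw [hG]
    group
  have := le_of_coverCostLE_pow_mul_pow_mul_pow hX
  omega
end

section
/- Define a word-level spelling length λ on words over the alphabet {X_1,...,X_N, X_1^{-1},...,X_N^{-1}} recursively by λ(e)=0 and λ(U) = min(1 + λ(U_{2:k}), min over j with U(j)=U(1)^{-1} of λ(U_{2:j-1}) + λ(U_{j+1:k})) for a word U of length k. Then λ descends to a function on the free group F(X_1,...,X_N) (i.e., λ(U) = λ(U') whenever U and U' represent the same group element), and on the free group it coincides with the spelling length Λ. -/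
/-!
`λ(U)` is the least number of letters left over after cancelling a non-crossing family of
mutually inverse pairs of letters of `U`. Such cancellations can be inserted into one another at
any position, hence are preserved under cyclic rotation of the word; rotating an inserted pair
`x x⁻¹` to the front shows that it can be removed without increasing the count, so `λ` is
invariant under free reduction. A non-crossing cancellation leaving `k` letters is the same as a
spelling with `k` factors: the outermost cancelled pair `x … x⁻¹` conjugates what it encloses.
-/

/-- A letter in the alphabet `{X_1,…,X_N, X_1⁻¹,…,X_N⁻¹}`: `(i, true)` is `X_i` and
`(i, false)` is `X_i⁻¹`. -/
abbrev Letter (N : ℕ) := Fin N × Bool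

/-- The inverse letter. -/
def invLetter {N : ℕ} (x : Letter N) : Letter N := (x.1, !x.2)

/-- `lam` is the word-level spelling length: `λ(e) = 0` and
`λ(U) = min(1 + λ(U_{2:k}), min_{j : U(j) = U(1)⁻¹} λ(U_{2:j-1}) + λ(U_{j+1:k}))`. -/
def IsWordSpellingLength {N : ℕ} (lam : List (Letter N) → ℕ) : Prop :=
  lam [] = 0 ∧
    ∀ (x : Letter N) (rest : List (Letter N)),
      lam (x :: rest) =
        ((List.range rest.length).filterMap fun j =>
            if rest[j]? = some (invLetter x) then
              some (lam (rest.take j) + lam (rest.drop (j + 1)))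
            else none).foldl min (1 + lam rest)

@[simp]
theorem invLetter_invLetter {N : ℕ} (x : Letter N) : invLetter (invLetter x) = x := by
  simp [invLetter]

theorem List.foldl_min_mem_and_le {α : Type*} [LinearOrder α] (a : α) (l : List α) :
    l.foldl min a ∈ a :: l ∧ ∀ b ∈ a :: l, l.foldl min a ≤ b :=
  List.min?_eq_some_iff.mp List.min?_cons'

namespace IsWordSpellingLength

variable {N : ℕ} {lam : List (Letter N) → ℕ}

theorem cons_le (hlam : IsWordSpellingLength lam) (x : Letter N) (rest : List (Letter N)) :
    lam (x :: rest) ≤ 1 + lam rest := by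
  rw [hlam.2]
  exact (List.foldl_min_mem_and_le _ _).2 _ List.mem_cons_self

theorem cons_append_invLetter_cons_le (hlam : IsWordSpellingLength lam) (x : Letter N)
    (A B : List (Letter N)) : lam (x :: (A ++ invLetter x :: B)) ≤ lam A + lam B := by
  rw [hlam.2]
  refine (List.foldl_min_mem_and_le _ _).2 _ (List.mem_cons_of_mem _ ?_)
  refine List.mem_filterMap.2 ⟨A.length, by simp, ?_⟩
  simp

theorem cons_cases (hlam : IsWordSpellingLength lam) (x : Letter N) (rest : List (Letter N)) :
    lam (x :: rest) = 1 + lam rest ∨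
      ∃ A B, rest = A ++ invLetter x :: B ∧ lam (x :: rest) = lam A + lam B := by
  rw [hlam.2]
  rcases List.mem_cons.1 (List.foldl_min_mem_and_le (1 + lam rest) _).1 with h | h
  · exact Or.inl h
  obtain ⟨j, -, hj⟩ := List.mem_filterMap.1 h
  split_ifs at hj with hget
  obtain ⟨hlt, hx⟩ := List.getElem?_eq_some_iff.1 hget
  refine Or.inr ⟨rest.take j, rest.drop (j + 1), ?_, (Option.some.inj hj).symm⟩
  rw [← hx, ← List.drop_eq_getElem_cons, List.take_append_drop]

end IsWordSpellingLength

/-- `HasWordSpelling W k`: cancelling a non-crossing family of mutually inverse pairs of letters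
of `W` leaves `k` letters. The constructors follow the two branches of the recursion for `λ`. -/
inductive HasWordSpelling {N : ℕ} : List (Letter N) → ℕ → Prop
  | nil : HasWordSpelling [] 0
  | cons (x : Letter N) {A : List (Letter N)} {a : ℕ} :
      HasWordSpelling A a → HasWordSpelling (x :: A) (a + 1)
  | cancel (x : Letter N) {A B : List (Letter N)} {a b : ℕ} :
      HasWordSpelling A a → HasWordSpelling B b →
        HasWordSpelling (x :: (A ++ invLetter x :: B)) (a + b)

namespace HasWordSpelling

variable {N : ℕ}

theorem singleton (x : Letter N) : HasWordSpelling [x] 1 := nil.cons x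

theorem append {A B : List (Letter N)} {a b : ℕ} (hA : HasWordSpelling A a)
    (hB : HasWordSpelling B b) : HasWordSpelling (A ++ B) (a + b) := by
  induction hA with
  | nil => simpa using hB
  | cons x _ ih => simpa [Nat.add_right_comm] using ih.cons x
  | cancel x _ _ _ ih => simpa [Nat.add_assoc] using cancel x ‹_› ih

theorem conj (x : Letter N) {A : List (Letter N)} {a : ℕ} (hA : HasWordSpelling A a) :
    HasWordSpelling (x :: (A ++ [invLetter x])) a :=
  cancel x hA nil

theorem insert {U V Y : List (Letter N)} {a b : ℕ} (hW : HasWordSpelling (U ++ V) a)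
    (hY : HasWordSpelling Y b) : HasWordSpelling (U ++ Y ++ V) (a + b) := by
  generalize hUV : U ++ V = W at hW
  induction hW generalizing U V with
  | nil =>
    obtain ⟨rfl, rfl⟩ := List.append_eq_nil_iff.1 hUV
    simpa using hY
  | cons x hA ih =>
    rcases U with _ | ⟨u, U⟩
    · subst hUV
      simpa [Nat.add_comm] using hY.append (hA.cons x)
    obtain ⟨rfl, rfl⟩ := List.cons_eq_cons.1 hUV.symm
    simpa [Nat.add_right_comm] using (ih rfl).cons x
  | cancel x hA hB ihA ihB =>
    rcases U with _ | ⟨u, U⟩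
    · subst hUV
      simpa [Nat.add_comm] using hY.append (cancel x hA hB)
    obtain ⟨rfl, hsplit⟩ := List.cons_eq_cons.1 hUV.symm
    rcases List.append_eq_append_iff.1 hsplit with ⟨C, rfl, hC⟩ | ⟨C, rfl, rfl⟩
    · rcases List.cons_eq_append_iff.1 hC with ⟨rfl, rfl⟩ | ⟨C, rfl, rfl⟩
      · simpa [Nat.add_right_comm] using cancel x (ihA (V := []) (by simp)) hB
      · simpa [Nat.add_assoc] using cancel x hA (ihB rfl)
    · simpa [Nat.add_right_comm] using cancel x (ihA rfl) hB

theorem rotate {A B : List (Letter N)} {k : ℕ} (h : HasWordSpelling (A ++ B) k) :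
    HasWordSpelling (B ++ A) k := by
  generalize hAB : A ++ B = W at h
  induction h generalizing A B with
  | nil =>
    obtain ⟨rfl, rfl⟩ := List.append_eq_nil_iff.1 hAB
    exact nil
  | cons x hW ih =>
    rcases A with _ | ⟨a, A⟩
    · simpa [← hAB] using hW.cons x
    obtain ⟨rfl, rfl⟩ := List.cons_eq_cons.1 hAB.symm
    simpa using (ih rfl).insert (U := B) (singleton x)
  | cancel x hP hQ ihP ihQ =>
    rcases A with _ | ⟨a, A⟩
    · simpa [← hAB] using cancel x hP hQ
    obtain ⟨rfl, hsplit⟩ := List.cons_eq_cons.1 hAB.symm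
    rcases List.append_eq_append_iff.1 hsplit with ⟨C, rfl, hC⟩ | ⟨C, rfl, rfl⟩
    · rcases List.cons_eq_append_iff.1 hC with ⟨rfl, rfl⟩ | ⟨C, rfl, rfl⟩
      · simpa [Nat.add_comm] using (conj (invLetter x) hQ).append hP
      · simpa [Nat.add_comm] using (ihQ rfl).insert (U := B) (conj x hP)
    · simpa using (ihP rfl).insert (U := C) (conj (invLetter x) hQ)

theorem exists_le_succ_of_cons {y : Letter N} {V : List (Letter N)} {k : ℕ}
    (h : HasWordSpelling (y :: V) k) : ∃ k' ≤ k + 1, HasWordSpelling V k' := by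
  cases h with
  | cons _ hV => exact ⟨_, by omega, hV⟩
  | cancel _ hA hB => exact ⟨_, by omega, hA.append (hB.cons _)⟩

theorem exists_le_of_cons_invLetter_cons {x : Letter N} {V : List (Letter N)} {k : ℕ}
    (h : HasWordSpelling (x :: invLetter x :: V) k) : ∃ k' ≤ k, HasWordSpelling V k' := by
  generalize hW : x :: invLetter x :: V = W at h
  cases h with
  | nil => cases hW
  | cons _ hV =>
    obtain ⟨-, rfl⟩ := List.cons_eq_cons.1 hW
    obtain ⟨k', hk', h'⟩ := hV.exists_le_succ_of_cons
    exact ⟨k', by omega, h'⟩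
  | cancel _ hA hB =>
    obtain ⟨rfl, hsplit⟩ := List.cons_eq_cons.1 hW
    rcases List.cons_eq_append_iff.1 hsplit with ⟨rfl, hB'⟩ | ⟨A, rfl, rfl⟩
    · obtain ⟨-, rfl⟩ := List.cons_eq_cons.1 hB'
      exact ⟨_, by omega, hB⟩
    · exact ⟨_, le_rfl, by simpa using (hA.rotate (A := [_])).append hB⟩

theorem exists_le_of_cancel {U V : List (Letter N)} {x : Letter N} {k : ℕ}
    (h : HasWordSpelling (U ++ x :: invLetter x :: V) k) :
    ∃ k' ≤ k, HasWordSpelling (U ++ V) k' := by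
  obtain ⟨k', hk', h'⟩ := exists_le_of_cons_invLetter_cons (by simpa using h.rotate)
  exact ⟨k', hk', h'.rotate⟩

theorem insert_cancel {U V : List (Letter N)} {k : ℕ} (x : Letter N)
    (h : HasWordSpelling (U ++ V) k) : HasWordSpelling (U ++ x :: invLetter x :: V) k := by
  simpa using h.insert (cancel x nil nil)

end HasWordSpelling

namespace IsWordSpellingLength

variable {N : ℕ} {lam : List (Letter N) → ℕ}

theorem hasWordSpelling (hlam : IsWordSpellingLength lam) (U : List (Letter N)) :
    HasWordSpelling U (lam U) := by
  induction hn : U.length using Nat.strong_induction_on generalizing U with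
  | _ n ih =>
    subst hn
    rcases U with _ | ⟨x, rest⟩
    · exact hlam.1 ▸ .nil
    rcases hlam.cons_cases x rest with h | ⟨A, B, rfl, h⟩
    · rw [h, Nat.add_comm]
      exact (ih _ (by simp) rest rfl).cons x
    · rw [h]
      have hlen : (x :: (A ++ invLetter x :: B)).length = A.length + B.length + 2 := by
        simp only [List.length_cons, List.length_append]
        omega
      exact .cancel x (ih _ (by omega) A rfl) (ih _ (by omega) B rfl)

theorem le_of_hasWordSpelling (hlam : IsWordSpellingLength lam) {U : List (Letter N)} {k : ℕ}
    (h : HasWordSpelling U k) : lam U ≤ k := by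
  induction h with
  | nil => exact hlam.1.le
  | cons x _ ih => exact (hlam.cons_le x _).trans (by omega)
  | cancel x _ _ ihA ihB =>
    exact (hlam.cons_append_invLetter_cons_le x _ _).trans (Nat.add_le_add ihA ihB)

theorem eq_of_step (hlam : IsWordSpellingLength lam) {L₁ L₂ : List (Letter N)}
    (s : FreeGroup.Red.Step L₁ L₂) : lam L₁ = lam L₂ := by
  cases s with | @not U V x b => ?_
  apply le_antisymm
  · exact hlam.le_of_hasWordSpelling ((hlam.hasWordSpelling (U ++ V)).insert_cancel (x, b))
  · obtain ⟨k, hk, h⟩ :=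
      (hlam.hasWordSpelling (U ++ (x, b) :: invLetter (x, b) :: V)).exists_le_of_cancel
    exact (hlam.le_of_hasWordSpelling h).trans hk

theorem eq_of_red (hlam : IsWordSpellingLength lam) {L₁ L₂ : List (Letter N)}
    (r : FreeGroup.Red L₁ L₂) : lam L₁ = lam L₂ := by
  induction r with
  | refl => rfl
  | tail _ s ih => exact ih.trans (hlam.eq_of_step s)

theorem eq_of_mk_eq (hlam : IsWordSpellingLength lam) {L₁ L₂ : List (Letter N)}
    (e : FreeGroup.mk L₁ = FreeGroup.mk L₂) : lam L₁ = lam L₂ := by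
  obtain ⟨L₃, r₁, r₂⟩ := FreeGroup.Red.exact.mp e
  rw [hlam.eq_of_red r₁, hlam.eq_of_red r₂]

end IsWordSpellingLength

section SpellingLength

variable {N : ℕ}

theorem spellingFactor_eq (h : FreeGroup (Fin N)) (x : Letter N) :
    spellingFactor (h, x) = h * FreeGroup.mk [x] * h⁻¹ := by
  rcases x with ⟨i, _ | _⟩ <;>
    simp [spellingFactor, FreeGroup.of, FreeGroup.inv_mk, FreeGroup.invRev]

theorem HasWordSpelling.append_cons_invRev (A : List (Letter N)) (x : Letter N) :
    HasWordSpelling (A ++ x :: FreeGroup.invRev A) 1 := by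
  induction A with
  | nil => exact .singleton x
  | cons a A ih => simpa [FreeGroup.invRev, invLetter] using ih.conj a

theorem IsSpelling.mul {g g' : FreeGroup (Fin N)}
    {L L' : List (FreeGroup (Fin N) × Fin N × Bool)} (hL : IsSpelling g L)
    (hL' : IsSpelling g' L') : IsSpelling (g * g') (L ++ L') := by
  rw [IsSpelling, List.map_append, List.prod_append, hL, hL']

theorem IsSpelling.conj {g : FreeGroup (Fin N)} {L : List (FreeGroup (Fin N) × Fin N × Bool)}
    (hL : IsSpelling g L) (a : FreeGroup (Fin N)) :
    IsSpelling (a * g * a⁻¹) (L.map fun f => (a * f.1, f.2)) := by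
  have hconj : spellingFactor ∘ (fun f => (a * f.1, f.2)) = MulAut.conj a ∘ spellingFactor := by
    ext f
    simp [spellingFactor, mul_assoc]
  rw [IsSpelling, List.map_map, hconj, ← List.map_map, ← map_list_prod, hL, MulAut.conj_apply]

theorem mk_append_cons_invRev (A : List (Letter N)) (x : Letter N) :
    FreeGroup.mk (A ++ x :: FreeGroup.invRev A) = spellingFactor (FreeGroup.mk A, x) := by
  simp [spellingFactor_eq, FreeGroup.inv_mk, FreeGroup.mul_mk]

theorem HasWordSpelling.exists_isSpelling {W : List (Letter N)} {k : ℕ}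
    (h : HasWordSpelling W k) : ∃ L, IsSpelling (FreeGroup.mk W) L ∧ L.length = k := by
  induction h with
  | nil => exact ⟨[], by simp [IsSpelling, FreeGroup.one_eq_mk], rfl⟩
  | cons x _ ih =>
    obtain ⟨L, hL, rfl⟩ := ih
    have hx : IsSpelling (FreeGroup.mk [x]) [(1, x)] := by simp [IsSpelling, spellingFactor_eq]
    exact ⟨_, hx.mul hL, by simp⟩
  | @cancel x A B _ _ _ _ ihA ihB =>
    obtain ⟨LA, hLA, rfl⟩ := ihA
    obtain ⟨LB, hLB, rfl⟩ := ihB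
    have hW : FreeGroup.mk (x :: (A ++ invLetter x :: B)) =
        FreeGroup.mk [x] * FreeGroup.mk A * (FreeGroup.mk [x])⁻¹ * FreeGroup.mk B := by
      simp [FreeGroup.inv_mk, FreeGroup.invRev, invLetter, FreeGroup.mul_mk]
    exact ⟨_, hW ▸ (hLA.conj _).mul hLB, by simp⟩

theorem IsSpelling.exists_hasWordSpelling {g : FreeGroup (Fin N)}
    {L : List (FreeGroup (Fin N) × Fin N × Bool)} (hL : IsSpelling g L) :
    ∃ W, FreeGroup.mk W = g ∧ HasWordSpelling W L.length := by
  unfold IsSpelling at hL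
  subst hL
  induction L with
  | nil => exact ⟨[], by simp [FreeGroup.one_eq_mk], .nil⟩
  | cons f L ih =>
    obtain ⟨W, hW, hWL⟩ := ih
    obtain ⟨h, x⟩ := f
    refine ⟨(h.toWord ++ x :: FreeGroup.invRev h.toWord) ++ W, ?_, ?_⟩
    · rw [← FreeGroup.mul_mk, mk_append_cons_invRev, FreeGroup.mk_toWord, hW]
      simp
    · simpa [Nat.add_comm] using (HasWordSpelling.append_cons_invRev _ x).append hWL

theorem setOf_isSpelling_length_eq (g : FreeGroup (Fin N)) :
    {r | ∃ L, IsSpelling g L ∧ L.length = r} =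
      {k | ∃ W, FreeGroup.mk W = g ∧ HasWordSpelling W k} := by
  ext k
  constructor
  · rintro ⟨L, hL, rfl⟩
    exact hL.exists_hasWordSpelling
  · rintro ⟨W, rfl, hW⟩
    exact hW.exists_isSpelling

end SpellingLength

/-- the word-level spelling length `λ` descends to the free group, where it
coincides with the spelling length `Λ`. -/
theorem wordSpellingLength_descends_and_eq_spellingLength {N : ℕ}
    (lam : List (Letter N) → ℕ) (hlam : IsWordSpellingLength lam) :
    (∀ U U' : List (Letter N), FreeGroup.mk U = FreeGroup.mk U' → lam U = lam U') ∧
      ∀ U : List (Letter N), lam U = spellingLength (FreeGroup.mk U) := by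
  refine ⟨fun U U' => hlam.eq_of_mk_eq, fun U => ?_⟩
  have hleast : IsLeast {k | ∃ W, FreeGroup.mk W = FreeGroup.mk U ∧ HasWordSpelling W k}
      (lam U) := by
    refine ⟨⟨U, rfl, hlam.hasWordSpelling U⟩, ?_⟩
    rintro k ⟨W, hW, hk⟩
    rw [hlam.eq_of_mk_eq hW.symm]
    exact hlam.le_of_hasWordSpelling hk
  rw [spellingLength, setOf_isSpelling_length_eq, hleast.csInf_eq]
end
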